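/- Under the standing assumptions, let γ ∈ (0, 1/L_f) and σ ∈ (0, (1 − γL_f)/γ). Then for every x ∈ C, every x̄ ∈ T_γ(x) with x̄ ≠ x, and every d ∈ ℝⁿ, there exists τ̄ ∈ (0, 1] such that for all τ ∈ [0, τ̄], the point x_τ := (1 − τ)x̄ + τ(x + d) lies in C and satisfies φ_γ(x_τ) ≤ φ_γ(x) − σ·D_h(x̄, x). -/

import Mathlib

open Filter Topology Set Bornology
open scoped RealInnerProductSpace

noncomputable section

/-- `ℝⁿ` as a Euclidean space. -/
abbrev Rn (n : ℕ) := EuclideanSpace ℝ (Fin n)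

variable {n : ℕ}

/-- Effective domain of an extended-real-valued function. -/
def edom (h : Rn n → EReal) : Set (Rn n) := {x | h x < ⊤}

/-- Properness: finite somewhere, never `⊥`. -/
def ERealProper (h : Rn n → EReal) : Prop := (∃ x, h x < ⊤) ∧ ∀ x, h x ≠ ⊥

/-- Convexity on a set for extended-real-valued functions. -/
def ERealConvexOn (s : Set (Rn n)) (h : Rn n → EReal) : Prop :=
  ∀ ⦃x⦄, x ∈ s → ∀ ⦃y⦄, y ∈ s → ∀ ⦃a b : ℝ⦄, 0 ≤ a → 0 ≤ b → a + b = 1 →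
    h (a • x + b • y) ≤ (a : EReal) * h x + (b : EReal) * h y

/-- Strict convexity on a set for extended-real-valued functions. -/
def ERealStrictConvexOn (s : Set (Rn n)) (h : Rn n → EReal) : Prop :=
  ∀ ⦃x⦄, x ∈ s → ∀ ⦃y⦄, y ∈ s → x ≠ y → ∀ ⦃a b : ℝ⦄, 0 < a → 0 < b → a + b = 1 →
    h (a • x + b • y) < (a : EReal) * h x + (b : EReal) * h y

/-- Strong convexity with modulus `σ` on a set, for extended-real-valued functions. -/
def ERealStrongConvexOn (s : Set (Rn n)) (σ : ℝ) (h : Rn n → EReal) : Prop :=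
  ∀ ⦃x⦄, x ∈ s → ∀ ⦃y⦄, y ∈ s → ∀ ⦃a b : ℝ⦄, 0 ≤ a → 0 ≤ b → a + b = 1 →
    h (a • x + b • y) + ((σ / 2 * (a * b) * ‖x - y‖ ^ 2 : ℝ) : EReal)
      ≤ (a : EReal) * h x + (b : EReal) * h y

/-- A Legendre kernel `h`, together with (a choice of) its gradient mapping `h'` on the
interior of its domain: proper, lsc, convex, 1-coercive, continuously differentiable and
strictly convex on the (nonempty) interior of its domain, and essentially smooth. -/
structure LegendreKernel (h : Rn n → EReal) (h' : Rn n → Rn n) : Prop where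
  proper : ERealProper h
  lsc : LowerSemicontinuous h
  convex : ERealConvexOn Set.univ h
  nonemptyInterior : (interior (edom h)).Nonempty
  coercive : ∀ M : ℝ, ∃ R : ℝ, ∀ x : Rn n, R ≤ ‖x‖ → ((M * ‖x‖ : ℝ) : EReal) ≤ h x
  differentiable : ∀ x ∈ interior (edom h), HasGradientAt (fun y => (h y).toReal) (h' x) x
  gradContinuous : ContinuousOn h' (interior (edom h))
  strictConvexOn : ERealStrictConvexOn (interior (edom h)) h
  essentiallySmooth : ∀ x ∈ frontier (edom h), ∀ u : ℕ → Rn n,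
    (∀ k, u k ∈ interior (edom h)) → Tendsto u atTop (𝓝 x) →
    Tendsto (fun k => ‖h' (u k)‖) atTop atTop

open scoped Classical in
/-- Bregman distance `D_h(z, x)`, equal to `⊤` when `x ∉ int dom h`. -/
def Dbreg (h : Rn n → EReal) (h' : Rn n → Rn n) (z x : Rn n) : EReal :=
  if x ∈ interior (edom h) then h z - h x - ((⟪h' x, z - x⟫ : ℝ) : EReal) else ⊤

/-- Objective function of the Bregman proximal subproblem. -/
def bregObj (h : Rn n → EReal) (h' : Rn n → Rn n) (φ : Rn n → EReal) (γ : ℝ)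
    (x z : Rn n) : EReal :=
  φ z + ((1 / γ : ℝ) : EReal) * Dbreg h h' z x

/-- Bregman–Moreau envelope `φ^{h/γ}`. -/
def bregEnv (h : Rn n → EReal) (h' : Rn n → Rn n) (φ : Rn n → EReal) (γ : ℝ)
    (x : Rn n) : EReal :=
  ⨅ z, bregObj h h' φ γ x z

/-- Bregman proximal mapping `prox_{γ φ}^h` (set of minimizers of the prox subproblem). -/
def bregProx (h : Rn n → EReal) (h' : Rn n → Rn n) (φ : Rn n → EReal) (γ : ℝ)
    (x : Rn n) : Set (Rn n) :=
  {z | ∀ w, bregObj h h' φ γ x z ≤ bregObj h h' φ γ x w}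

/-- `γ` lies strictly below the prox-boundedness threshold `γ_φ^h`. -/
def BelowThreshold (h : Rn n → EReal) (h' : Rn n → Rn n) (φ : Rn n → EReal) (γ : ℝ) : Prop :=
  0 < γ ∧ ∃ γ' : ℝ, γ < γ' ∧ ∃ x, bregEnv h h' φ γ' x ≠ ⊥

/-- `φ` is `h`-prox-bounded: the threshold `γ_φ^h` is positive. -/
def ProxBounded (h : Rn n → EReal) (h' : Rn n → Rn n) (φ : Rn n → EReal) : Prop :=
  ∃ γ : ℝ, 0 < γ ∧ ∃ x, bregEnv h h' φ γ x ≠ ⊥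

/-- `f` is `Lf`-smooth relative to the kernel `h`:  `f` is proper, lsc,
`dom f ⊇ dom h`, and `Lf·h ± f` are convex on `int dom h`. -/
def RelSmooth (h f : Rn n → EReal) (Lf : ℝ) : Prop :=
  ERealProper f ∧ LowerSemicontinuous f ∧ edom h ⊆ edom f ∧
  ERealConvexOn (interior (edom h)) (fun x => (Lf : EReal) * h x + f x) ∧
  ERealConvexOn (interior (edom h)) (fun x => (Lf : EReal) * h x - f x)

/-- Objective function of the Bregman forward-backward subproblem. -/
def fbObj (h : Rn n → EReal) (h' : Rn n → Rn n) (f : Rn n → EReal) (f' : Rn n → Rn n)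
    (g : Rn n → EReal) (γ : ℝ) (x z : Rn n) : EReal :=
  f x + ((⟪f' x, z - x⟫ : ℝ) : EReal) + g z + ((1 / γ : ℝ) : EReal) * Dbreg h h' z x

/-- Bregman forward-backward mapping `T_γ`. -/
def fbT (h : Rn n → EReal) (h' : Rn n → Rn n) (f : Rn n → EReal) (f' : Rn n → Rn n)
    (g : Rn n → EReal) (γ : ℝ) (x : Rn n) : Set (Rn n) :=
  {z | ∀ w, fbObj h h' f f' g γ x z ≤ fbObj h h' f f' g γ x w}

/-- Bregman forward-backward envelope `φ_γ`. -/
def fbEnv (h : Rn n → EReal) (h' : Rn n → Rn n) (f : Rn n → EReal) (f' : Rn n → Rn n)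
    (g : Rn n → EReal) (γ : ℝ) (x : Rn n) : EReal :=
  ⨅ z, fbObj h h' f f' g γ x z

end

/-!
Since `xb` minimizes the forward–backward model at `x`, `φ_γ(x)` equals
`ℓ_x(xb) + g(xb)` with `ℓ_y(z) = f(y) + ⟪∇f(y), z - y⟫ + D_h(z, y) / γ`. The descent inequality
of relative smoothness gives `ℓ_x(xb) - σ D_h(xb, x) ≥ f(xb) + (1/γ - L_f - σ) D_h(xb, x)`,
which exceeds `f(xb)` because `D_h(xb, x) > 0` by strict convexity. Conversely
`φ_γ(y) ≤ ℓ_y(xb) + g(xb)`, and the reverse descent inequality bounds `ℓ_y(xb)` by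
`f(xb) + (L_f + 1/γ) D_h(xb, y)`, which tends to `f(xb)` as `y → xb`. So the strict gap survives
for all `y` close to `xb`, in particular on the segment from `xb` towards `x + d`.
-/

section Gradient

variable {E : Type*} [NormedAddCommGroup E] [InnerProductSpace ℝ E] {s : Set E} {φ : E → ℝ}
  {v y z : E}

theorem ConvexOn.add_inner_le_of_hasGradientAt [CompleteSpace E] (hφ : ConvexOn ℝ s φ)
    (hy : y ∈ s) (hz : z ∈ s) (hv : HasGradientAt φ v y) : φ y + ⟪v, z - y⟫ ≤ φ z := by
  have hderiv : HasDerivAt (φ ∘ AffineMap.lineMap (k := ℝ) y z) ⟪v, z - y⟫ 0 := by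
    have hv' : HasFDerivAt φ (InnerProductSpace.toDual ℝ E v) (AffineMap.lineMap (k := ℝ) y z 0) :=
      by simpa using hv.hasFDerivAt
    simpa using hv'.comp_hasDerivAt (0 : ℝ) AffineMap.hasDerivAt_lineMap
  have hslope := (hφ.comp_affineMap (AffineMap.lineMap (k := ℝ) y z)).le_slope_of_hasDerivAt
    (by simpa using hy) (by simpa using hz) one_pos hderiv
  simp only [slope_def_field, Function.comp_apply, AffineMap.lineMap_apply_one,
    AffineMap.lineMap_apply_zero, sub_zero, div_one] at hslope
  linarith

theorem StrictConvexOn.add_inner_lt_of_hasGradientAt [CompleteSpace E]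
    (hφ : StrictConvexOn ℝ s φ) (hy : y ∈ s) (hz : z ∈ s) (hyz : y ≠ z)
    (hv : HasGradientAt φ v y) : φ y + ⟪v, z - y⟫ < φ z := by
  have hm : (1 / 2 : ℝ) • y + (1 / 2 : ℝ) • z ∈ s :=
    hφ.1 hy hz (by norm_num) (by norm_num) (by norm_num)
  have hmid := hφ.2 hy hz hyz (by norm_num : (0 : ℝ) < 1 / 2) (by norm_num : (0 : ℝ) < 1 / 2)
    (by norm_num)
  have hgrad := hφ.convexOn.add_inner_le_of_hasGradientAt hy hm hv
  rw [show (1 / 2 : ℝ) • y + (1 / 2 : ℝ) • z - y = (1 / 2 : ℝ) • (z - y) by module,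
    real_inner_smul_right] at hgrad
  rw [smul_eq_mul, smul_eq_mul] at hmid
  linarith

noncomputable def bregmanDist (H : E → ℝ) (H' : E → E) (z x : E) : ℝ :=
  H z - H x - ⟪H' x, z - x⟫

variable {F H : E → ℝ} {F' H' : E → E} {L γ : ℝ}

theorem bregmanDist_pos [CompleteSpace E] (hH : StrictConvexOn ℝ s H) (hy : y ∈ s) (hz : z ∈ s)
    (hyz : y ≠ z) (hH' : HasGradientAt H (H' y) y) : 0 < bregmanDist H H' z y := by
  have := hH.add_inner_lt_of_hasGradientAt hy hz hyz hH'
  unfold bregmanDist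
  linarith

theorem tendsto_bregmanDist_nhds_self [CompleteSpace E] (hH : HasGradientAt H (H' z) z)
    (hH' : ContinuousAt H' z) : Tendsto (fun y => bregmanDist H H' z y) (𝓝 z) (𝓝 0) := by
  have hcont : ContinuousAt (fun y => bregmanDist H H' z y) z :=
    (continuousAt_const.sub hH.differentiableAt.continuousAt).sub
      (hH'.inner (continuousAt_const.sub continuousAt_id))
  simpa [bregmanDist] using hcont.tendsto

theorem abs_sub_sub_inner_le_bregmanDist [CompleteSpace E]
    (hplus : ConvexOn ℝ s (fun w => L * H w + F w))
    (hminus : ConvexOn ℝ s (fun w => L * H w - F w))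
    (hH : HasGradientAt H (H' y) y) (hF : HasGradientAt F (F' y) y) (hy : y ∈ s) (hz : z ∈ s) :
    |F z - F y - ⟪F' y, z - y⟫| ≤ L * bregmanDist H H' z y := by
  have hgrad (ε : ℝ) : HasGradientAt (fun w => L * H w + ε * F w) (L • H' y + ε • F' y) y := by
    rw [hasGradientAt_iff_hasFDerivAt]
    refine ((hH.hasFDerivAt.const_mul L).add (hF.hasFDerivAt.const_mul ε)).congr_fderiv ?_
    ext w
    simp
  have h1 := hplus.add_inner_le_of_hasGradientAt hy hz (by simpa using hgrad 1)
  have h2 := hminus.add_inner_le_of_hasGradientAt hy hz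
    (by simpa [sub_eq_add_neg] using hgrad (-1))
  simp only [inner_add_left, inner_neg_left, real_inner_smul_left] at h1 h2
  rw [abs_le]
  unfold bregmanDist
  constructor <;> nlinarith

noncomputable def fbModel (F H : E → ℝ) (F' H' : E → E) (γ : ℝ) (y z : E) : ℝ :=
  F y + ⟪F' y, z - y⟫ + 1 / γ * bregmanDist H H' z y

theorem lt_fbModel_sub_mul_bregmanDist {σ : ℝ}
    (hdesc : |F z - F y - ⟪F' y, z - y⟫| ≤ L * bregmanDist H H' z y)
    (hD : 0 < bregmanDist H H' z y) (hσ : σ < 1 / γ - L) :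
    F z < fbModel F H F' H' γ y z - σ * bregmanDist H H' z y := by
  have hgap := mul_pos (sub_pos.2 hσ) hD
  have := (abs_le.1 hdesc).2
  unfold fbModel
  nlinarith

theorem eventually_fbModel_lt [CompleteSpace E] {c : ℝ} (hs : s ∈ 𝓝 z)
    (hdesc : ∀ y ∈ s, |F z - F y - ⟪F' y, z - y⟫| ≤ L * bregmanDist H H' z y)
    (hH : HasGradientAt H (H' z) z) (hH' : ContinuousAt H' z) (hc : F z < c) :
    ∀ᶠ y in 𝓝 z, y ∈ s ∧ fbModel F H F' H' γ y z < c := by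
  have hlim : Tendsto (fun y => F z + (L + 1 / γ) * bregmanDist H H' z y) (𝓝 z) (𝓝 (F z)) := by
    simpa using ((tendsto_bregmanDist_nhds_self hH hH').const_mul (L + 1 / γ)).const_add (F z)
  filter_upwards [hs, hlim.eventually_lt_const hc] with y hy hlt
  refine ⟨hy, lt_of_le_of_lt ?_ hlt⟩
  have := (abs_le.1 (hdesc y hy)).1
  unfold fbModel
  rw [add_mul]
  linarith

end Gradient

theorem exists_forall_mem_Icc_of_eventually_nhds_zero {P : ℝ → Prop} (hP : ∀ᶠ τ in 𝓝 0, P τ) :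
    ∃ τbar : ℝ, 0 < τbar ∧ τbar ≤ 1 ∧ ∀ τ, 0 ≤ τ → τ ≤ τbar → P τ := by
  obtain ⟨u, hu, hsub⟩ := mem_nhdsGE_iff_exists_Icc_subset.mp (nhdsWithin_le_nhds hP)
  exact ⟨min u 1, lt_min hu one_pos, min_le_right _ _,
    fun τ h0 h1 => hsub ⟨h0, h1.trans (min_le_left _ _)⟩⟩

section ERealFunctions

variable {n : ℕ} {φ : Rn n → EReal} {s : Set (Rn n)}

theorem ERealProper.coe_toReal (hφ : ERealProper φ) {x : Rn n} (hx : x ∈ edom φ) :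
    ((φ x).toReal : EReal) = φ x :=
  EReal.coe_toReal hx.ne (hφ.2 x)

theorem ERealConvexOn.convex_edom (hφ : ERealConvexOn univ φ) : Convex ℝ (edom φ) := by
  intro p hp q hq a b ha hb hab
  have hfin {c : ℝ} (hc : 0 ≤ c) {y : Rn n} (hy : y ∈ edom φ) : (c : EReal) * φ y ≠ ⊤ :=
    (EReal.mul_ne_top _ _).2 ⟨.inl (EReal.coe_ne_bot c), .inl (EReal.coe_nonneg.2 hc),
      .inl (EReal.coe_ne_top c), .inr (ne_of_lt hy)⟩
  exact (hφ (mem_univ p) (mem_univ q) ha hb hab).trans_lt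
    (EReal.add_lt_top (hfin ha hp) (hfin hb hq))

theorem ERealConvexOn.convexOn_of_eqOn_coe (hφ : ERealConvexOn s φ) (hs : Convex ℝ s)
    {ψ : Rn n → ℝ} (hψ : ∀ y ∈ s, φ y = ψ y) : ConvexOn ℝ s ψ := by
  refine ⟨hs, fun p hp q hq a b ha hb hab => ?_⟩
  have key := hφ hp hq ha hb hab
  rw [hψ _ hp, hψ _ hq, hψ _ (hs hp hq ha hb hab)] at key
  exact_mod_cast key

theorem ERealStrictConvexOn.strictConvexOn_of_eqOn_coe (hφ : ERealStrictConvexOn s φ)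
    (hs : Convex ℝ s) {ψ : Rn n → ℝ} (hψ : ∀ y ∈ s, φ y = ψ y) : StrictConvexOn ℝ s ψ := by
  refine ⟨hs, fun p hp q hq hpq a b ha hb hab => ?_⟩
  have key := hφ hp hq hpq ha hb hab
  rw [hψ _ hp, hψ _ hq, hψ _ (hs hp hq ha.le hb.le hab)] at key
  exact_mod_cast key

end ERealFunctions

namespace LegendreKernel

variable {n : ℕ} {h : Rn n → EReal} {h' : Rn n → Rn n}

theorem coe_toReal (hLeg : LegendreKernel h h') {y : Rn n} (hy : y ∈ interior (edom h)) :
    ((h y).toReal : EReal) = h y :=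
  hLeg.proper.coe_toReal (interior_subset hy)

theorem convex_interior_edom (hLeg : LegendreKernel h h') : Convex ℝ (interior (edom h)) :=
  hLeg.convex.convex_edom.interior

theorem strictConvexOn_toReal (hLeg : LegendreKernel h h') :
    StrictConvexOn ℝ (interior (edom h)) (fun y => (h y).toReal) :=
  hLeg.strictConvexOn.strictConvexOn_of_eqOn_coe hLeg.convex_interior_edom
    fun _ hy => (hLeg.coe_toReal hy).symm

theorem dbreg_eq_bregmanDist (hLeg : LegendreKernel h h') {x z : Rn n}
    (hz : z ∈ interior (edom h)) (hx : x ∈ interior (edom h)) :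
    Dbreg h h' z x = (bregmanDist (fun y => (h y).toReal) h' z x : EReal) := by
  rw [Dbreg, if_pos hx, ← hLeg.coe_toReal hz, ← hLeg.coe_toReal hx, bregmanDist]
  push_cast
  rfl

end LegendreKernel

section RelativeSmoothness

variable {n : ℕ} {h : Rn n → EReal} {h' : Rn n → Rn n} {f : Rn n → EReal} {f' : Rn n → Rn n}
  {Lf : ℝ}

theorem RelSmooth.abs_sub_sub_inner_le_bregmanDist (hRel : RelSmooth h f Lf)
    (hLeg : LegendreKernel h h')
    (hf' : ∀ x ∈ interior (edom h), HasGradientAt (fun y => (f y).toReal) (f' x) x)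
    {y z : Rn n} (hy : y ∈ interior (edom h)) (hz : z ∈ interior (edom h)) :
    |(f z).toReal - (f y).toReal - ⟪f' y, z - y⟫|
      ≤ Lf * bregmanDist (fun w => (h w).toReal) h' z y := by
  have hval (w : Rn n) (hw : w ∈ interior (edom h)) :
      h w = (h w).toReal ∧ f w = (f w).toReal :=
    ⟨(hLeg.coe_toReal hw).symm, (hRel.1.coe_toReal (hRel.2.2.1 (interior_subset hw))).symm⟩
  have hplus := hRel.2.2.2.1.convexOn_of_eqOn_coe hLeg.convex_interior_edom
    (ψ := fun w => Lf * (h w).toReal + (f w).toReal) fun w hw => by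
      rw [(hval w hw).1, (hval w hw).2]; norm_cast
  have hminus := hRel.2.2.2.2.convexOn_of_eqOn_coe hLeg.convex_interior_edom
    (ψ := fun w => Lf * (h w).toReal - (f w).toReal) fun w hw => by
      rw [(hval w hw).1, (hval w hw).2]; norm_cast
  exact _root_.abs_sub_sub_inner_le_bregmanDist hplus hminus (hLeg.differentiable y hy) (hf' y hy)
    hy hz

theorem fbObj_eq_fbModel_add (hRel : RelSmooth h f Lf) (hLeg : LegendreKernel h h')
    (g : Rn n → EReal) (γ : ℝ) {y z : Rn n} (hy : y ∈ interior (edom h))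
    (hz : z ∈ interior (edom h)) :
    fbObj h h' f f' g γ y z
      = (fbModel (fun w => (f w).toReal) (fun w => (h w).toReal) f' h' γ y z : EReal) + g z := by
  rw [fbObj, hLeg.dbreg_eq_bregmanDist hz hy,
    ← hRel.1.coe_toReal (hRel.2.2.1 (interior_subset hy)), fbModel]
  push_cast
  exact add_right_comm _ _ _

end RelativeSmoothness

theorem stmt15_linesearch_well_defined_general
    {n : ℕ} (h : Rn n → EReal) (h' : Rn n → Rn n) (f : Rn n → EReal) (f' : Rn n → Rn n)
    (g : Rn n → EReal) (Lf γ σ : ℝ)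
    (hLeg : LegendreKernel h h') (hRel : RelSmooth h f Lf)
    (hf' : ∀ x ∈ interior (edom h), HasGradientAt (fun y => (f y).toReal) (f' x) x)
    (hγ : 0 < γ)
    (hrange : ∀ x ∈ interior (edom h), fbT h h' f f' g γ x ⊆ interior (edom h))
    (hσlt : σ < (1 - γ * Lf) / γ)
    (x : Rn n) (hx : x ∈ interior (edom h))
    (xb : Rn n) (hxb : xb ∈ fbT h h' f f' g γ x) (hne : xb ≠ x) (d : Rn n) :
    ∃ τbar : ℝ, 0 < τbar ∧ τbar ≤ 1 ∧
      ∀ τ : ℝ, 0 ≤ τ → τ ≤ τbar →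
        (1 - τ) • xb + τ • (x + d) ∈ interior (edom h) ∧
        fbEnv h h' f f' g γ ((1 - τ) • xb + τ • (x + d))
          ≤ fbEnv h h' f f' g γ x - ((σ : ℝ) : EReal) * Dbreg h h' xb x := by
  set F : Rn n → ℝ := fun y => (f y).toReal
  set H : Rn n → ℝ := fun y => (h y).toReal
  have hxbC : xb ∈ interior (edom h) := hrange x hx hxb
  have hσ : σ < 1 / γ - Lf := by rwa [sub_div, mul_div_cancel_left₀ _ hγ.ne'] at hσlt
  have hdecrease : F xb < fbModel F H f' h' γ x xb - σ * bregmanDist H h' xb x :=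
    lt_fbModel_sub_mul_bregmanDist (hRel.abs_sub_sub_inner_le_bregmanDist hLeg hf' hx hxbC)
      (bregmanDist_pos hLeg.strictConvexOn_toReal hx hxbC hne.symm (hLeg.differentiable x hx)) hσ
  have hnear := eventually_fbModel_lt (γ := γ) (isOpen_interior.mem_nhds hxbC)
    (fun y hy => hRel.abs_sub_sub_inner_le_bregmanDist hLeg hf' hy hxbC)
    (hLeg.differentiable xb hxbC)
    (hLeg.gradContinuous.continuousAt (isOpen_interior.mem_nhds hxbC)) hdecrease
  have hpath : Tendsto (fun τ : ℝ => (1 - τ) • xb + τ • (x + d)) (𝓝 0) (𝓝 xb) :=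
    Continuous.tendsto' (by fun_prop) 0 xb (by simp)
  obtain ⟨τbar, hτbar, hτbar1, hsmall⟩ :=
    exists_forall_mem_Icc_of_eventually_nhds_zero (hpath.eventually hnear)
  refine ⟨τbar, hτbar, hτbar1, fun τ hτ0 hτ1 => ?_⟩
  obtain ⟨hmem, hlt⟩ := hsmall τ hτ0 hτ1
  refine ⟨hmem, ?_⟩
  calc fbEnv h h' f f' g γ ((1 - τ) • xb + τ • (x + d))
      ≤ fbObj h h' f f' g γ ((1 - τ) • xb + τ • (x + d)) xb := iInf_le _ xb
    _ = (fbModel F H f' h' γ ((1 - τ) • xb + τ • (x + d)) xb : EReal) + g xb :=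
        fbObj_eq_fbModel_add hRel hLeg g γ hmem hxbC
    _ ≤ ((fbModel F H f' h' γ x xb - σ * bregmanDist H h' xb x : ℝ) : EReal) + g xb :=
        add_le_add_left (EReal.coe_le_coe_iff.2 hlt.le) _
    _ = fbObj h h' f f' g γ x xb - ((σ : ℝ) : EReal) * Dbreg h h' xb x := by
        rw [fbObj_eq_fbModel_add hRel hLeg g γ hx hxbC, hLeg.dbreg_eq_bregmanDist hxbC hx,
          EReal.coe_sub, EReal.coe_mul, sub_eq_add_neg, sub_eq_add_neg, add_right_comm]
    _ ≤ fbEnv h h' f f' g γ x - ((σ : ℝ) : EReal) * Dbreg h h' xb x :=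
        EReal.sub_le_sub (le_iInf hxb) le_rfl

theorem stmt15_linesearch_well_defined
    {n : ℕ} (h : Rn n → EReal) (h' : Rn n → Rn n) (f : Rn n → EReal) (f' : Rn n → Rn n)
    (g : Rn n → EReal) (Lf γ σ : ℝ)
    (hLeg : LegendreKernel h h') (hLf : 0 ≤ Lf) (hRel : RelSmooth h f Lf)
    (hf' : ∀ x ∈ interior (edom h), HasGradientAt (fun y => (f y).toReal) (f' x) x)
    (hg : ERealProper g) (hglsc : LowerSemicontinuous g)
    (hmin : ∃ xm ∈ closure (interior (edom h)),
      ∀ y ∈ closure (interior (edom h)), f xm + g xm ≤ f y + g y)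
    (hγ : 0 < γ) (hγL : γ * Lf < 1)
    (hrange : ∀ x ∈ interior (edom h), fbT h h' f f' g γ x ⊆ interior (edom h))
    (hσ : 0 < σ) (hσlt : σ < (1 - γ * Lf) / γ)
    (x : Rn n) (hx : x ∈ interior (edom h))
    (xb : Rn n) (hxb : xb ∈ fbT h h' f f' g γ x) (hne : xb ≠ x) (d : Rn n) :
    ∃ τbar : ℝ, 0 < τbar ∧ τbar ≤ 1 ∧
      ∀ τ : ℝ, 0 ≤ τ → τ ≤ τbar →
        (1 - τ) • xb + τ • (x + d) ∈ interior (edom h) ∧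
        fbEnv h h' f f' g γ ((1 - τ) • xb + τ • (x + d))
          ≤ fbEnv h h' f f' g γ x - ((σ : ℝ) : EReal) * Dbreg h h' xb x :=
  stmt15_linesearch_well_defined_general h h' f f' g Lf γ σ hLeg hRel hf' hγ hrange hσlt x hx xb hxb
    hne d
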